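/- Let A be a ring and J a two-sided ideal of A such that the blow-up ring Bl_J(A) is left Noetherian and J is contained in the Jacobson radical of A. Then for every finitely generated left A-module M and every submodule N ⊆ M one has ⋂_{n≥0} (N + J^nM) = N. In particular (N = 0), every finitely generated left A-module is separated in the J-adic topology, and every submodule of a finitely generated left A-module is closed in the J-adic topology. -/

import Mathlib

/-!
Let `L = ⋂ₙ JⁿM` and present `M` as a quotient `π : Aᵏ → M`. The vectors over `Bl_J(A)` all of
whose coefficient vectors are sent into `L` by `π` form a `Bl_J(A)`-submodule of `Bl_J(A)ᵏ`, which
is finitely generated because `Bl_J(A)` is left Noetherian; let `t` bound the degrees of its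
generators. Every `l ∈ L ⊆ J^{t+1}M` lifts to some `ξ ∈ (J^{t+1})ᵏ`, and `ξ X^{t+1}` lies in this
submodule. Expanding it in the generators, only coefficients of positive degree of `Bl_J(A)`
contribute in degree `t + 1`, and these lie in `J`; hence `l ∈ J L`. As `A` is a quotient of
`Bl_J(A)`, it is left Noetherian, so `L` is finitely generated and Nakayama's lemma gives `L = 0`.
The statement for a submodule `N` is the case `L = 0` for `M ⧸ N`.
-/

open scoped Pointwise
open Polynomial

section PowSet

variable {A : Type*} [Ring A]

/-- The `n`-th power of a (two-sided) ideal `J` of a ring `A`, with the convention `J ^ 0 = A`,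
realized as an additive subgroup of `A`. -/
def powSet (J : Ideal A) : ℕ → AddSubgroup A
  | 0 => ⊤
  | 1 => J.toAddSubgroup
  | n + 2 => AddSubgroup.closure ((J : Set A) * (powSet J (n + 1) : Set A))

theorem powSet_succ_succ (J : Ideal A) (n : ℕ) :
    powSet J (n + 2) = AddSubgroup.closure ((J : Set A) * (powSet J (n + 1) : Set A)) := rfl

theorem powSet_mul_mem_left (J : Ideal A) :
    ∀ (n : ℕ) (a : A) {x : A}, x ∈ powSet J n → a * x ∈ powSet J n
  | 0, a, x, _ => AddSubgroup.mem_top _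
  | 1, a, x, hx => J.mul_mem_left a hx
  | n + 2, a, x, hx => by
    induction hx using AddSubgroup.closure_induction with
    | mem z hz =>
      obtain ⟨u, hu, v, hv, rfl⟩ := hz
      exact AddSubgroup.subset_closure
        ⟨a * u, J.mul_mem_left a hu, v, hv, mul_assoc a u v⟩
    | zero => simpa using (powSet J (n + 2)).zero_mem
    | add x y hx hy ihx ihy => simpa [mul_add] using add_mem ihx ihy
    | neg x hx ihx => simpa [mul_neg] using neg_mem ihx

theorem powSet_mul_mem_right (J : Ideal A) (hJ : ∀ x ∈ J, ∀ a : A, x * a ∈ J) :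
    ∀ (n : ℕ) (a : A) {x : A}, x ∈ powSet J n → x * a ∈ powSet J n
  | 0, a, x, _ => AddSubgroup.mem_top _
  | 1, a, x, hx => hJ x hx a
  | n + 2, a, x, hx => by
    induction hx using AddSubgroup.closure_induction with
    | mem z hz =>
      obtain ⟨u, hu, v, hv, rfl⟩ := hz
      exact AddSubgroup.subset_closure
        ⟨u, hu, v * a, powSet_mul_mem_right J hJ (n + 1) a hv, (mul_assoc u v a).symm⟩
    | zero => simpa using (powSet J (n + 2)).zero_mem
    | add x y hx hy ihx ihy => simpa [add_mul] using add_mem ihx ihy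
    | neg x hx ihx => simpa [neg_mul] using neg_mem ihx

theorem powSet_mul_mem (J : Ideal A) (hJ : ∀ x ∈ J, ∀ a : A, x * a ∈ J) :
    ∀ (i j : ℕ) {x y : A}, x ∈ powSet J i → y ∈ powSet J j → x * y ∈ powSet J (i + j)
  | 0, j, x, y, _, hy => by simpa using powSet_mul_mem_left J j x hy
  | 1, 0, x, y, hx, _ => by simpa using powSet_mul_mem_right J hJ 1 y hx
  | 1, j + 1, x, y, hx, hy => by
    rw [show 1 + (j + 1) = j + 2 from by omega, powSet_succ_succ]
    exact AddSubgroup.subset_closure ⟨x, hx, y, hy, rfl⟩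
  | i + 2, j, x, y, hx, hy => by
    rw [show i + 2 + j = (i + j) + 2 from by omega, powSet_succ_succ]
    induction hx using AddSubgroup.closure_induction with
    | mem z hz =>
      obtain ⟨u, hu, v, hv, rfl⟩ := hz
      have hvy : v * y ∈ powSet J (i + 1 + j) := powSet_mul_mem J hJ (i + 1) j hv hy
      rw [show i + 1 + j = i + j + 1 from by omega] at hvy
      exact AddSubgroup.subset_closure ⟨u, hu, v * y, hvy, (mul_assoc u v y).symm⟩
    | zero =>
      simpa using (AddSubgroup.closure ((J : Set A) * (powSet J (i + j + 1) : Set A))).zero_mem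
    | add x₁ x₂ hx₁ hx₂ ih₁ ih₂ => simpa [add_mul] using add_mem ih₁ ih₂
    | neg x₁ hx₁ ih₁ => simpa [neg_mul] using neg_mem ih₁

end PowSet

section BlowUp

variable {A : Type*} [Ring A]

/-- The blow-up ring `Bl_J(A) = ⊕_{i ≥ 0} J^i` of a two-sided ideal `J ⊆ A`, realized as the
subring of the polynomial ring `A[X]` consisting of the polynomials whose `X^i`-coefficient
lies in `J^i` for every `i`. -/
def blowUp (J : Ideal A) (hJ : ∀ x ∈ J, ∀ a : A, x * a ∈ J) : Subring A[X] where
  carrier := {p : A[X] | ∀ i : ℕ, p.coeff i ∈ powSet J i}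
  zero_mem' := fun i => by
    simp only [Polynomial.coeff_zero]; exact (powSet J i).zero_mem
  one_mem' := fun i => by
    rcases i with _ | i
    · exact AddSubgroup.mem_top _
    · simp only [Polynomial.coeff_one, Nat.succ_ne_zero, if_neg (Nat.succ_ne_zero i).symm]
      simpa using (powSet J (i + 1)).zero_mem
  add_mem' := fun {p q} hp hq i => by
    simpa [Polynomial.coeff_add] using add_mem (hp i) (hq i)
  neg_mem' := fun {p} hp i => by
    simpa [Polynomial.coeff_neg] using neg_mem (hp i)
  mul_mem' := fun {p q} hp hq n => by
    rw [Polynomial.coeff_mul]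
    refine AddSubgroup.sum_mem _ fun c hc => ?_
    have h := powSet_mul_mem J hJ c.1 c.2 (hp c.1) (hq c.2)
    rwa [Finset.HasAntidiagonal.mem_antidiagonal.mp hc] at h

end BlowUp

section Completion

variable {A : Type*} [Ring A]

theorem powSet_succ_le (J : Ideal A) :
    ∀ n : ℕ, powSet J (n + 1) ≤ powSet J n
  | 0 => le_top
  | n + 1 => by
    rw [powSet_succ_succ]
    refine (AddSubgroup.closure_le _).mpr ?_
    rintro z ⟨u, hu, v, hv, rfl⟩
    exact powSet_mul_mem_left J (n + 1) u hv

/-- For a subset `S ⊆ A` and a submodule `N` of an `A`-module `M`, the submodule `S·N` of `M`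
spanned by all products `x • m` with `x ∈ S`, `m ∈ N`. -/
def jsmul (S : Set A) {M : Type*} [AddCommGroup M] [Module A M] (N : Submodule A M) :
    Submodule A M :=
  Submodule.span A {z | ∃ x ∈ S, ∃ m ∈ N, z = x • m}

/-- The submodule `J^n M` of an `A`-module `M`. -/
def jadic (J : Ideal A) (M : Type*) [AddCommGroup M] [Module A M] (n : ℕ) : Submodule A M :=
  jsmul ((powSet J n : AddSubgroup A) : Set A) (⊤ : Submodule A M)

theorem jadic_succ_le (J : Ideal A) (M : Type*) [AddCommGroup M] [Module A M] (n : ℕ) :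
    jadic J M (n + 1) ≤ jadic J M n := by
  refine Submodule.span_mono ?_
  rintro z ⟨x, hx, m, hm, rfl⟩
  exact ⟨x, powSet_succ_le J n hx, m, hm, rfl⟩

/-- The transition map `M/J^{n+1}M → M/J^nM`. -/
def transition (J : Ideal A) (M : Type*) [AddCommGroup M] [Module A M] (n : ℕ) :
    (M ⧸ jadic J M (n + 1)) →ₗ[A] M ⧸ jadic J M n :=
  Submodule.mapQ _ _ LinearMap.id (fun _ hx => jadic_succ_le J M n hx)

/-- The `J`-adic completion `M^∧ = lim_n M/J^nM` of an `A`-module `M`, realized as the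
module of compatible sequences in `∀ n, M/J^nM`. -/
def adicCompletion (J : Ideal A) (M : Type*) [AddCommGroup M] [Module A M] :
    Submodule A (∀ n : ℕ, M ⧸ jadic J M n) where
  carrier := {f | ∀ n : ℕ, transition J M n (f (n + 1)) = f n}
  add_mem' := fun {f g} hf hg n => by
    simp only [Pi.add_apply, map_add, hf n, hg n]
  zero_mem' := fun n => by simp
  smul_mem' := fun a f hf n => by
    simp only [Pi.smul_apply, map_smul, hf n]

theorem jadic_le_comap (J : Ideal A) {M M₂ : Type*} [AddCommGroup M] [Module A M]
    [AddCommGroup M₂] [Module A M₂] (f : M →ₗ[A] M₂) (n : ℕ) :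
    jadic J M n ≤ (jadic J M₂ n).comap f := by
  rw [jadic, jsmul, Submodule.span_le]
  rintro z ⟨x, hx, m, _, rfl⟩
  simp only [SetLike.mem_coe, Submodule.mem_comap, map_smul]
  exact Submodule.subset_span ⟨x, hx, f m, Submodule.mem_top, rfl⟩

/-- The map `M/J^nM → M₂/J^nM₂` induced by a linear map `f : M → M₂`. -/
def inducedQ (J : Ideal A) {M M₂ : Type*} [AddCommGroup M] [Module A M]
    [AddCommGroup M₂] [Module A M₂] (f : M →ₗ[A] M₂) (n : ℕ) :
    (M ⧸ jadic J M n) →ₗ[A] M₂ ⧸ jadic J M₂ n :=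
  Submodule.mapQ _ _ f (jadic_le_comap J f n)

theorem transition_inducedQ (J : Ideal A) {M M₂ : Type*} [AddCommGroup M] [Module A M]
    [AddCommGroup M₂] [Module A M₂] (f : M →ₗ[A] M₂) (n : ℕ)
    (x : M ⧸ jadic J M (n + 1)) :
    transition J M₂ n (inducedQ J f (n + 1) x) = inducedQ J f n (transition J M n x) := by
  obtain ⟨m, rfl⟩ := Submodule.Quotient.mk_surjective _ x
  simp [transition, inducedQ, Submodule.mapQ_apply]

/-- The map `M^∧ → M₂^∧` between `J`-adic completions induced by a linear map `f : M → M₂`;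
this is the natural functorial structure of the `J`-adic completion. -/
def completionMap (J : Ideal A) {M M₂ : Type*} [AddCommGroup M] [Module A M]
    [AddCommGroup M₂] [Module A M₂] (f : M →ₗ[A] M₂) :
    adicCompletion J M →ₗ[A] adicCompletion J M₂ where
  toFun g := ⟨fun n => inducedQ J f n (g.1 n), fun n => by
    rw [transition_inducedQ, g.2 n]⟩
  map_add' g₁ g₂ := Subtype.ext (funext fun n => by
    simp [Submodule.coe_add, Pi.add_apply, map_add])
  map_smul' a g := Subtype.ext (funext fun n => by
    simp [Submodule.coe_smul, Pi.smul_apply, map_smul])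

end Completion

open Finset.HasAntidiagonal

section PowSet

variable {A : Type*} [Ring A] (J : Ideal A)

theorem powSet_antitone : Antitone (powSet J) :=
  antitone_nat_of_succ_le (powSet_succ_le J)

theorem mem_of_mem_powSet {n : ℕ} (hn : n ≠ 0) {x : A} (hx : x ∈ powSet J n) : x ∈ J :=
  powSet_antitone J (Nat.one_le_iff_ne_zero.mpr hn) hx

theorem map_jadic_of_surjective {M M₂ : Type*} [AddCommGroup M] [Module A M]
    [AddCommGroup M₂] [Module A M₂] {f : M →ₗ[A] M₂} (hf : Function.Surjective f)
    (n : ℕ) : (jadic J M n).map f = jadic J M₂ n := by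
  rw [jadic, jadic, jsmul, jsmul, Submodule.map_span]
  congr 1
  ext z
  constructor
  · rintro ⟨w, ⟨x, hx, m, -, rfl⟩, rfl⟩
    exact ⟨x, hx, f m, Submodule.mem_top, map_smul f x m⟩
  · rintro ⟨x, hx, m₂, -, rfl⟩
    obtain ⟨m, rfl⟩ := hf m₂
    exact ⟨x • m, ⟨x, hx, m, Submodule.mem_top, rfl⟩, map_smul f x m⟩

theorem apply_mem_powSet_of_mem_jadic (hJ : ∀ x ∈ J, ∀ a : A, x * a ∈ J) {ι : Type*}
    {n : ℕ} {ξ : ι → A} (hξ : ξ ∈ jadic J (ι → A) n) (i : ι) : ξ i ∈ powSet J n := by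
  induction hξ using Submodule.span_induction with
  | mem _ h =>
    obtain ⟨x, hx, c, -, rfl⟩ := h
    exact powSet_mul_mem_right J hJ n (c i) hx
  | zero => exact zero_mem _
  | add _ _ _ _ h₁ h₂ => exact add_mem h₁ h₂
  | smul a _ _ h => exact powSet_mul_mem_left J n a h

end PowSet

section BlowUp

variable {A : Type*} [Ring A] {J : Ideal A} {hJ : ∀ x ∈ J, ∀ a : A, x * a ∈ J}

theorem monomial_mem_blowUp {m : ℕ} {a : A} (ha : a ∈ powSet J m) :
    monomial m a ∈ blowUp J hJ := by
  intro i
  rw [coeff_monomial]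
  split_ifs with h
  · exact h ▸ ha
  · exact zero_mem _

theorem IsNoetherianRing.of_blowUp [IsNoetherianRing (blowUp J hJ)] : IsNoetherianRing A :=
  isNoetherianRing_of_surjective _ _ (constantCoeff.comp (blowUp J hJ).subtype) fun a =>
    ⟨⟨C a, monomial_zero_left (a := a) ▸ monomial_mem_blowUp (AddSubgroup.mem_top a)⟩,
      coeff_C_zero⟩

variable {ι : Type*}

def coeffVec (v : ι → blowUp J hJ) (d : ℕ) : ι → A :=
  fun i => (v i : A[X]).coeff d

theorem coeffVec_add (v w : ι → blowUp J hJ) (d : ℕ) :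
    coeffVec (v + w) d = coeffVec v d + coeffVec w d := by
  funext i
  simp [coeffVec]

theorem coeffVec_zero (d : ℕ) : coeffVec (0 : ι → blowUp J hJ) d = 0 := by
  funext i
  simp [coeffVec]

theorem coeffVec_smul (b : blowUp J hJ) (v : ι → blowUp J hJ) (d : ℕ) :
    coeffVec (b • v) d =
      ∑ pq ∈ antidiagonal d, (b : A[X]).coeff pq.1 • coeffVec v pq.2 := by
  funext i
  simp [coeffVec, coeff_mul]

theorem coeffVec_monomial {n : ℕ} {ξ : ι → A} (hξ : ∀ i, ξ i ∈ powSet J n) (d : ℕ) :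
    coeffVec (fun i => (⟨monomial n (ξ i), monomial_mem_blowUp (hξ i)⟩ : blowUp J hJ)) d =
      if n = d then ξ else 0 := by
  funext i
  split_ifs <;> simp [coeffVec, coeff_monomial, *]

end BlowUp

section Rees

variable {A : Type*} [Ring A] (J : Ideal A) (hJ : ∀ x ∈ J, ∀ a : A, x * a ∈ J)
  {ι M : Type*} [AddCommGroup M] [Module A M]

def reesComap (π : (ι → A) →ₗ[A] M) (L : Submodule A M) :
    Submodule (blowUp J hJ) (ι → blowUp J hJ) where
  carrier := {v | ∀ d, π (coeffVec v d) ∈ L}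
  add_mem' {v w} hv hw d := by
    rw [coeffVec_add, map_add]
    exact add_mem (hv d) (hw d)
  zero_mem' d := by
    rw [coeffVec_zero, map_zero]
    exact zero_mem L
  smul_mem' b v hv d := by
    rw [coeffVec_smul, map_sum]
    exact sum_mem fun pq _ => by rw [map_smul]; exact L.smul_mem _ (hv pq.2)

variable {J hJ}

theorem exists_coeffVec_mem_smul_of_fg [Fintype ι] {π : (ι → A) →ₗ[A] M}
    {L : Submodule A M} (hfg : (reesComap J hJ π L).FG) :
    ∃ t, ∀ v ∈ reesComap J hJ π L, ∀ d, t < d → π (coeffVec v d) ∈ J • L := by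
  obtain ⟨s, hs⟩ := hfg
  obtain ⟨t, hdeg⟩ : ∃ t, ∀ v ∈ s, ∀ i, (v i : A[X]).natDegree ≤ t := by
    refine ⟨s.sup fun v => Finset.univ.sup fun i => (v i : A[X]).natDegree, fun v hv i => ?_⟩
    have hi := Finset.le_sup (f := fun i => (v i : A[X]).natDegree) (Finset.mem_univ i)
    have hv := Finset.le_sup (f := fun v => Finset.univ.sup fun i => (v i : A[X]).natDegree) hv
    exact hi.trans hv
  refine ⟨t, fun v hv => ?_⟩
  rw [← hs] at hv
  induction hv using Submodule.span_induction with
  | mem v hv =>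
    intro d hd
    suffices coeffVec v d = 0 by rw [this, map_zero]; exact zero_mem _
    funext i
    exact coeff_eq_zero_of_natDegree_lt ((hdeg v hv i).trans_lt hd)
  | zero => intro d _; rw [coeffVec_zero, map_zero]; exact zero_mem _
  | add v w _ _ hv hw =>
    intro d hd; rw [coeffVec_add, map_add]; exact add_mem (hv d hd) (hw d hd)
  | smul b v hvK hv =>
    intro d hd
    rw [coeffVec_smul, map_sum]
    refine sum_mem fun pq hpq => ?_
    rw [map_smul]
    rcases eq_or_ne pq.1 0 with h0 | h0
    · have hq : pq.2 = d := by have := mem_antidiagonal.mp hpq; omega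
      exact Submodule.smul_mem _ _ (hq ▸ hv d hd)
    · have hvL : v ∈ reesComap J hJ π L := hs ▸ hvK
      exact Submodule.smul_mem_smul (mem_of_mem_powSet J h0 (b.2 pq.1)) (hvL pq.2)

end Rees

section Separation

variable {A : Type*} [Ring A] {J : Ideal A} (hJ : ∀ x ∈ J, ∀ a : A, x * a ∈ J)
  {M : Type*} [AddCommGroup M] [Module A M]

theorem iInf_jadic_le_smul [IsNoetherianRing (blowUp J hJ)] [Module.Finite A M] :
    ⨅ n, jadic J M n ≤ J • ⨅ n, jadic J M n := by
  set L := ⨅ n, jadic J M n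
  obtain ⟨k, π, hπ⟩ := Module.Finite.exists_fin' A M
  obtain ⟨t, ht⟩ :=
    exists_coeffVec_mem_smul_of_fg (IsNoetherian.noetherian (reesComap J hJ π L))
  intro l hl
  have hlt : l ∈ jadic J M (t + 1) := iInf_le (fun n => jadic J M n) (t + 1) hl
  rw [← map_jadic_of_surjective J hπ] at hlt
  obtain ⟨ξ, hξJ, rfl⟩ := hlt
  have hξ := apply_mem_powSet_of_mem_jadic J hJ hξJ
  let v : Fin k → blowUp J hJ := fun i =>
    ⟨monomial (t + 1) (ξ i), monomial_mem_blowUp (hξ i)⟩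
  have hv : v ∈ reesComap J hJ π L := fun d => by
    rw [coeffVec_monomial hξ]
    split_ifs with h
    · exact hl
    · rw [map_zero]; exact zero_mem L
  have hl' := ht v hv (t + 1) (lt_add_one t)
  rwa [coeffVec_monomial hξ, if_pos rfl] at hl'

theorem iInf_jadic_eq_bot [IsNoetherianRing (blowUp J hJ)] (hjac : J ≤ Ideal.jacobson ⊥)
    [Module.Finite A M] : ⨅ n, jadic J M n = ⊥ := by
  have := IsNoetherianRing.of_blowUp (hJ := hJ)
  refine Submodule.FG.eq_bot_of_le_jacobson_smul (IsNoetherian.noetherian _) ?_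
  exact (iInf_jadic_le_smul hJ).trans
    (Submodule.smul_mono_left (Ideal.jacobson_bot (R := A) ▸ hjac))

end Separation

theorem sup_jadic_eq_comap_mkQ {A : Type*} [Ring A] (J : Ideal A) {M : Type*} [AddCommGroup M]
    [Module A M] (N : Submodule A M) (n : ℕ) :
    N ⊔ jadic J M n = (jadic J (M ⧸ N) n).comap N.mkQ := by
  rw [← map_jadic_of_surjective J N.mkQ_surjective, Submodule.comap_map_eq, Submodule.ker_mkQ,
    sup_comm]

/-- **Krull separation.** Let `A` be a ring and `J` a two-sided ideal of `A` such
that the blow-up ring `Bl_J(A)` is left Noetherian and `J` is contained in the Jacobson radical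
of `A`. Then for every finitely generated left `A`-module `M` and every submodule `N ⊆ M` one
has `⋂_{n ≥ 0} (N + J^n M) = N`. (In particular, taking `N = 0`, every finitely generated left
`A`-module is separated in the `J`-adic topology, and every submodule of a finitely generated
left `A`-module is closed in the `J`-adic topology.) -/
theorem krull_separation {A : Type*} [Ring A] (J : Ideal A)
    (hJtwoSided : ∀ x ∈ J, ∀ a : A, x * a ∈ J)
    (hbl : IsNoetherianRing (blowUp J hJtwoSided))
    (hjac : J ≤ Ideal.jacobson (⊥ : Ideal A))
    (M : Type*) [AddCommGroup M] [Module A M] [Module.Finite A M] (N : Submodule A M) :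
    (⨅ n : ℕ, (N ⊔ jadic J M n)) = N := by
  simp_rw [sup_jadic_eq_comap_mkQ, ← Submodule.comap_iInf, iInf_jadic_eq_bot hJtwoSided hjac,
    Submodule.comap_bot, Submodule.ker_mkQ]
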